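/- arXiv:2201.02308 — 4 statements merged into one kernel-verified Lean document; each statement's English description precedes it below -/
import Mathlib

section
/- In the monoid M = ⟨x_0, x_1, x_2, ... | x_j x_i = x_i x_{j+1} for 0 ≤ i < j⟩, every element can be written in the normal form x_{i_1} x_{i_2} ... x_{i_k} with k ≥ 0 and i_1 ≤ i_2 ≤ ... ≤ i_k. -/
/-- The defining relation of Thompson's monoid: `x_j x_i = x_i x_{j+1}` for `i < j`. -/
def thompsonRel : FreeMonoid ℕ → FreeMonoid ℕ → Prop := fun a b =>
  ∃ i j : ℕ, i < j ∧ a = FreeMonoid.of j * FreeMonoid.of i ∧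
    b = FreeMonoid.of i * FreeMonoid.of (j + 1)

/-- The congruence on the free monoid generated by the Thompson relations. -/
def thompsonCon : Con (FreeMonoid ℕ) := conGen thompsonRel

/-- Thompson's monoid `M`. -/
abbrev ThompsonM := thompsonCon.Quotient

/-- The generators `x_n` of Thompson's monoid. -/
def xM (n : ℕ) : ThompsonM := thompsonCon.mk' (FreeMonoid.of n)

/-- The shift endomorphism `φ : M → M`, `x_i ↦ x_{i+1}`. -/
def shiftM : ThompsonM →* ThompsonM :=
  Con.lift _ ((Con.mk' thompsonCon).comp (FreeMonoid.map Nat.succ)) (by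
    apply Con.conGen_le.2
    rintro a b ⟨i, j, hij, rfl, rfl⟩
    simp only [Con.ker_rel, MonoidHom.comp_apply, map_mul, FreeMonoid.map_of]
    exact Con.eq _ |>.2 (ConGen.Rel.of _ _ ⟨i + 1, j + 1, by omega, rfl, rfl⟩))

/-- The relators of Thompson's group `F` (infinite presentation). -/
def thompsonRels : Set (FreeGroup ℕ) :=
  {w | ∃ i j : ℕ, i < j ∧
    w = FreeGroup.of j * FreeGroup.of i * (FreeGroup.of i * FreeGroup.of (j + 1))⁻¹}

/-- Thompson's group `F`. -/
abbrev ThompsonF := PresentedGroup thompsonRels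

/-- The generators `x_n` of Thompson's group. -/
def xF (n : ℕ) : ThompsonF := PresentedGroup.of n

/-- Word length, as a monoid homomorphism on the free monoid. -/
def lenHom : FreeMonoid ℕ →* Multiplicative ℕ where
  toFun w := Multiplicative.ofAdd w.length
  map_one' := by simp
  map_mul' a b := by
    simp [FreeMonoid.length_mul, ofAdd_add]

/-- Length is well defined on Thompson's monoid. -/
def lenM : ThompsonM →* Multiplicative ℕ :=
  Con.lift _ lenHom (by
    apply Con.conGen_le.2
    rintro a b ⟨i, j, hij, rfl, rfl⟩
    simp [Con.ker_rel, lenHom, FreeMonoid.length_mul]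
    rfl)

/-- The length of an element of Thompson's monoid. -/
def mlen (g : ThompsonM) : ℕ := Multiplicative.toAdd (lenM g)

/-- The degree of an element of the monoid ring `K[M]`. -/
noncomputable def mdeg {K : Type*} [Field K] (a : MonoidAlgebra K ThompsonM) : ℕ :=
  a.coeff.support.sup mlen

/-- The submonoid `M_i` of `M` generated by `x_i, x_{i+1}, …`. -/
def Msub (i : ℕ) : Submonoid ThompsonM :=
  Submonoid.closure {g | ∃ n : ℕ, i ≤ n ∧ g = xM n}

/-- The shift endomorphism of the monoid ring `K[M]` induced by `φ`. -/
noncomputable def shiftA (K : Type*) [Field K] :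
    MonoidAlgebra K ThompsonM →+* MonoidAlgebra K ThompsonM :=
  MonoidAlgebra.mapDomainRingHom K shiftM

/-- The natural homomorphism of Thompson's monoid into Thompson's group. -/
def iotaMF : ThompsonM →* ThompsonF :=
  Con.lift _ (FreeMonoid.lift xF) (by
    apply Con.conGen_le.2
    rintro a b ⟨i, j, hij, rfl, rfl⟩
    simp only [Con.ker_rel, map_mul, FreeMonoid.lift_eval_of]
    have h : (FreeGroup.of j * FreeGroup.of i *
        (FreeGroup.of i * FreeGroup.of (j + 1))⁻¹ : FreeGroup ℕ) ∈ thompsonRels :=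
      ⟨i, j, hij, rfl⟩
    have h1 : PresentedGroup.mk thompsonRels
        (FreeGroup.of j * FreeGroup.of i * (FreeGroup.of i * FreeGroup.of (j + 1))⁻¹) = 1 := by
      exact (QuotientGroup.eq_one_iff _).2 (Subgroup.subset_normalClosure h)
    have := h1
    rw [map_mul, map_mul, map_inv, map_mul, mul_inv_eq_one] at this
    simpa [xF, PresentedGroup.of] using this)

/-- The generator `x_n` as an element of the group ring `K[F]`. -/
noncomputable def XF (K : Type*) [Field K] (n : ℕ) : MonoidAlgebra K ThompsonF :=
  MonoidAlgebra.of K ThompsonF (xF n)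

/-- The generator `x_n` as an element of the monoid ring `K[M]`. -/
noncomputable def XMa (K : Type*) [Field K] (n : ℕ) : MonoidAlgebra K ThompsonM :=
  MonoidAlgebra.of K ThompsonM (xM n)

namespace ThompsonM

theorem xM_mul_xM_of_lt {i j : ℕ} (hij : i < j) : xM j * xM i = xM i * xM (j + 1) :=
  (Con.eq _).2 (ConGen.Rel.of _ _ ⟨i, j, hij, rfl, rfl⟩)

/-- Left multiplication of a normal form by `x_n`: since `x_n x_i = x_i x_{n+1}` for `i < n`,
the letter `x_n` moves right past every smaller letter, its index growing by one at each step. -/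
def insertShift : ℕ → List ℕ → List ℕ
  | n, [] => [n]
  | n, i :: l => if n ≤ i then n :: i :: l else i :: insertShift (n + 1) l

theorem mem_insertShift {n m : ℕ} {l : List ℕ} (h : m ∈ insertShift n l) : n ≤ m ∨ m ∈ l := by
  induction l generalizing n with
  | nil => simp_all [insertShift]
  | cons i l ih =>
    unfold insertShift at h
    split_ifs at h with hni
    · rcases List.mem_cons.1 h with rfl | h
      · exact .inl le_rfl
      · exact .inr h
    · rcases List.mem_cons.1 h with rfl | h
      · exact .inr List.mem_cons_self
      · rcases ih h with h | h
        · exact .inl (by omega)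
        · exact .inr (List.mem_cons_of_mem i h)

theorem pairwise_insertShift {n : ℕ} {l : List ℕ} (hl : l.Pairwise (· ≤ ·)) :
    (insertShift n l).Pairwise (· ≤ ·) := by
  induction l generalizing n with
  | nil => simp [insertShift]
  | cons i l ih =>
    rw [List.pairwise_cons] at hl
    unfold insertShift
    split_ifs with hni
    · refine List.pairwise_cons.2 ⟨fun b hb => ?_, List.pairwise_cons.2 hl⟩
      rcases List.mem_cons.1 hb with rfl | hb
      · exact hni
      · exact hni.trans (hl.1 b hb)
    · refine List.pairwise_cons.2 ⟨fun b hb => ?_, ih hl.2⟩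
      rcases mem_insertShift hb with h | h
      · omega
      · exact hl.1 b h

theorem mk'_ofList_cons (n : ℕ) (l : List ℕ) :
    thompsonCon.mk' (FreeMonoid.ofList (n :: l)) = xM n * thompsonCon.mk' (FreeMonoid.ofList l) :=
  rfl

theorem xM_mul_mk'_ofList (n : ℕ) (l : List ℕ) :
    xM n * thompsonCon.mk' (FreeMonoid.ofList l) =
      thompsonCon.mk' (FreeMonoid.ofList (insertShift n l)) := by
  induction l generalizing n with
  | nil => rfl
  | cons i l ih =>
    unfold insertShift
    split_ifs with hni
    · rfl
    · rw [mk'_ofList_cons, mk'_ofList_cons, ← ih, ← mul_assoc, xM_mul_xM_of_lt (by omega),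
        mul_assoc]

end ThompsonM

/-- every element of Thompson's monoid has a normal form
`x_{i_1} ⋯ x_{i_k}` with `i_1 ≤ ⋯ ≤ i_k`. -/
theorem stmt1 (g : ThompsonM) :
    ∃ l : List ℕ, l.Pairwise (· ≤ ·) ∧ g = thompsonCon.mk' (FreeMonoid.ofList l) := by
  obtain ⟨w, rfl⟩ := Con.mk'_surjective g
  induction w using FreeMonoid.inductionOn' with
  | one => exact ⟨[], List.Pairwise.nil, rfl⟩
  | of_mul n w ih =>
    obtain ⟨l, hl, hw⟩ := ih
    refine ⟨ThompsonM.insertShift n l, ThompsonM.pairwise_insertShift hl, ?_⟩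
    rw [map_mul, hw]
    exact ThompsonM.xM_mul_mk'_ofList n l
end

section
/- Let R = K[F] be the group ring of Thompson's group F over a field K. For any element b ∈ R, the equation (1 - x_0)·u = b·v has a solution (u, v) ∈ R² with (u, v) ≠ (0, 0). -/
/-!
Let `χ₀, χ₁ : F → ℤ` be the characters with `χ₀ x₀ = 1`, `χ₀ xᵢ = 0` for `i ≥ 1`, and `χ₁ xᵢ = 1`
for all `i`. Modulo the right ideal `(1 - x₀) K[F]` every `b` is congruent to an element `y`
supported on `ker χ₀`, so it suffices to find `v ≠ 0` with `y v ∈ (1 - x₀) K[F]`.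
Conjugating an element of `ker χ₀` by a large power of `x₀` turns it into a word in generators of
large index, and these commute with any fixed element of `ker χ₁`. Hence for `n` large, with
`y' = x₀⁻ⁿ y x₀ⁿ` and `D = ∑_g y_g x₀^(n - χ₁ g) g`, we get `y D = D y'`, so
`y (y' - D) = (y - D) y' ∈ (1 - x₀) K[F]`; and `y' - D ≠ 0` because `y'` lives on `χ₀ = 0`
while `D` lives on `χ₀ ≥ 1`.
-/

open Filter MonoidAlgebra

section

variable {G : Type*} [Group G]

theorem zpow_neg_toAdd_mul_mem_ker {t : G} {χ : G →* Multiplicative ℤ} (ht : χ t = .ofAdd 1)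
    (g : G) : t ^ (-Multiplicative.toAdd (χ g)) * g ∈ χ.ker := by
  rw [MonoidHom.mem_ker]
  apply Multiplicative.toAdd.injective
  simp [ht]

def eventualCentralizer (t g : G) : Subgroup G where
  carrier := {e | ∀ᶠ n : ℤ in atTop, Commute (t ^ (-n) * e * t ^ n) g}
  one_mem' := by simp
  mul_mem' {a b} ha hb := by
    filter_upwards [ha, hb] with n ha hb
    have : t ^ (-n) * (a * b) * t ^ n = (t ^ (-n) * a * t ^ n) * (t ^ (-n) * b * t ^ n) := by
      group
    exact this ▸ ha.mul_left hb
  inv_mem' {a} ha := by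
    filter_upwards [ha] with n ha
    have : t ^ (-n) * a⁻¹ * t ^ n = (t ^ (-n) * a * t ^ n)⁻¹ := by group
    exact this ▸ ha.inv_left

theorem zpow_mul_mul_zpow_neg_mem_eventualCentralizer {t g e : G}
    (he : e ∈ eventualCentralizer t g) (k : ℤ) :
    t ^ k * e * t ^ (-k) ∈ eventualCentralizer t g := by
  filter_upwards [(tendsto_atTop_add_const_right atTop (-k) tendsto_id).eventually he] with n hn
  have : t ^ (-n) * (t ^ k * e * t ^ (-k)) * t ^ n = t ^ (-(n + -k)) * e * t ^ (n + -k) := by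
    group
  exact this ▸ hn

end

namespace MonoidAlgebra

variable {K G : Type*} [CommRing K] [Group G]

theorem exists_one_sub_of_mul_eq_one_sub_of_zpow (t : G) (k : ℤ) :
    ∃ q : K[G], (1 - of K G t) * q = 1 - of K G (t ^ k) := by
  obtain ⟨n, rfl | rfl⟩ := k.eq_nat_or_neg
  · exact ⟨∑ i ∈ Finset.range n, of K G t ^ i, by rw [mul_neg_geom_sum, zpow_natCast, map_pow]⟩
  · refine ⟨-(∑ i ∈ Finset.range n, of K G t ^ i) * of K G (t ^ (-(n : ℤ))), ?_⟩
    rw [neg_mul, mul_neg, ← mul_assoc, mul_neg_geom_sum, ← map_pow, sub_mul, ← map_mul,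
      zpow_neg, zpow_natCast, mul_inv_cancel, map_one, one_mul]
    abel

theorem eq_sum_smul_of (y : K[G]) : y = ∑ g ∈ y.coeff.support, y.coeff g • of K G g := by
  simp only [smul_of]
  exact (sum_coeff_single y).symm

theorem commute_of_of_forall_mem_support {y : K[G]} {a : G}
    (h : ∀ f ∈ y.coeff.support, Commute f a) : Commute y (of K G a) := by
  rw [eq_sum_smul_of y]
  refine Commute.sum_left _ _ _ fun f hf => ?_
  exact ((h f hf).map (of K G)).smul_left _

theorem exists_support_subset_ker_eq_add_one_sub_mul {t : G} {χ : G →* Multiplicative ℤ}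
    (ht : χ t = .ofAdd 1) (x : K[G]) :
    ∃ y u : K[G], (y.coeff.support : Set G) ⊆ χ.ker ∧ x = y + (1 - of K G t) * u := by
  classical
  induction x using induction_linear with
  | zero => exact ⟨0, 0, by simp, by simp⟩
  | add x x' hx hx' =>
    obtain ⟨y, u, hy, rfl⟩ := hx
    obtain ⟨y', u', hy', rfl⟩ := hx'
    refine ⟨y + y', u + u', ?_, by rw [mul_add]; abel⟩
    exact (Finset.coe_subset.2 Finsupp.support_add).trans (by simpa using ⟨hy, hy'⟩)
  | single g c =>
    set k := Multiplicative.toAdd (χ g)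
    obtain ⟨q, hq⟩ := exists_one_sub_of_mul_eq_one_sub_of_zpow (K := K) t k
    refine ⟨single (t ^ (-k) * g) c, -(q * single (t ^ (-k) * g) c), ?_, ?_⟩
    · intro h hh
      obtain rfl := Finset.mem_singleton.1 (Finsupp.support_single_subset hh)
      exact zpow_neg_toAdd_mul_mem_ker ht g
    · rw [mul_neg, ← mul_assoc, hq, sub_mul, one_mul, of_apply, single_mul_single, zpow_neg,
        mul_inv_cancel_left, one_mul]
      abel

theorem mul_of_eq_of_mul_conj {y : K[G]} {h a : G}
    (hc : ∀ f ∈ y.coeff.support, Commute f (h * a⁻¹)) :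
    y * of K G h = of K G h * (of K G a⁻¹ * y * of K G a) := by
  have hw := commute_of_of_forall_mem_support hc
  rw [show h = h * a⁻¹ * a by group, map_mul, ← mul_assoc, hw.eq, mul_assoc (of K G _) (of K G a),
    ← mul_assoc (of K G a), ← mul_assoc (of K G a), ← map_mul, mul_inv_cancel, map_one, one_mul,
    mul_assoc]

theorem exists_sub_sum_smul_of_zpow_mul_eq_one_sub_mul (t : G) (m : G → ℤ) (y : K[G]) :
    ∃ u, y - ∑ g ∈ y.coeff.support, y.coeff g • of K G (t ^ m g * g) = (1 - of K G t) * u := by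
  choose q hq using exists_one_sub_of_mul_eq_one_sub_of_zpow (K := K) t
  refine ⟨∑ g ∈ y.coeff.support, y.coeff g • (q (m g) * of K G g), ?_⟩
  nth_rewrite 1 [eq_sum_smul_of y]
  simp only [← Finset.sum_sub_distrib, Finset.mul_sum, mul_smul_comm, ← mul_assoc, hq,
    ← smul_sub, sub_mul, one_mul, map_mul]

theorem conj_sub_sum_smul_of_zpow_mul_ne_zero {t : G} {χ : G →* Multiplicative ℤ}
    (ht : χ t = .ofAdd 1) {y : K[G]} (hy : (y.coeff.support : Set G) ⊆ χ.ker) (hy₀ : y ≠ 0)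
    (n : ℤ) {m : G → ℤ} (hm : ∀ g ∈ y.coeff.support, m g ≠ 0) :
    of K G (t ^ (-n)) * y * of K G (t ^ n) -
      ∑ g ∈ y.coeff.support, y.coeff g • of K G (t ^ m g * g) ≠ 0 := by
  obtain ⟨f, hf⟩ := Finsupp.support_nonempty_iff.2 (coeff_eq_zero.not.2 hy₀)
  intro hv
  replace hv := congrArg (fun v : K[G] => v.coeff (t ^ (-n) * f * t ^ n)) hv
  -- the conjugate of `y` lives on `ker χ`, while `t ^ m g * g` does not
  have hne : ∀ g ∈ y.coeff.support, t ^ m g * g ≠ t ^ (-n) * f * t ^ n := fun g hg heq => by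
    have := congrArg (Multiplicative.toAdd ∘ χ) heq
    simp [ht, MonoidHom.mem_ker.1 (hy hg), MonoidHom.mem_ker.1 (hy hf)] at this
    exact hm g hg this
  simp only [coeff_sub, coeff_sum, Finsupp.sub_apply, Finsupp.finsetSum_apply] at hv
  rw [Finset.sum_eq_zero fun g hg => by simp [hne g hg, -zpow_neg]] at hv
  exact Finsupp.mem_support_iff.1 hf (by simpa using hv)

theorem exists_mul_eq_one_sub_mul_ne_zero {t : G} {χ₀ χ₁ : G →* Multiplicative ℤ}
    (h₀ : χ₀ t = .ofAdd 1) (h₁ : χ₁ t = .ofAdd 1)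
    (hcomm : ∀ g ∈ χ₁.ker, χ₀.ker ≤ eventualCentralizer t g)
    {y : K[G]} (hy : (y.coeff.support : Set G) ⊆ χ₀.ker) (hy₀ : y ≠ 0) :
    ∃ u v : K[G], y * v = (1 - of K G t) * u ∧ v ≠ 0 := by
  set T := y.coeff.support
  set k : G → ℤ := fun g => Multiplicative.toAdd (χ₁ g)
  obtain ⟨n, hn⟩ : ∃ n : ℤ, ∀ g ∈ T, 0 < n - k g ∧
      ∀ f ∈ T, Commute (t ^ (-n) * f * t ^ n) (t ^ (-k g) * g) := by
    refine ((eventually_all_finset T).2 fun g _ =>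
      ((eventually_ge_atTop (1 + k g)).mono fun n hn => by omega).and <|
        (eventually_all_finset T).2 fun f hf =>
          hcomm _ (zpow_neg_toAdd_mul_mem_ker h₁ g) (hy hf)).exists
  set y' := of K G (t ^ (-n)) * y * of K G (t ^ n)
  set D := ∑ g ∈ T, y.coeff g • of K G (t ^ (n - k g) * g)
  have hD : y * D = D * y' := by
    simp only [D, Finset.mul_sum, Finset.sum_mul, mul_smul_comm, smul_mul_assoc]
    refine Finset.sum_congr rfl fun g hg => congrArg _ ?_
    rw [mul_of_eq_of_mul_conj fun f hf => ?_, ← zpow_neg]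
    have := (Commute.conj_iff (t ^ n)).2 ((hn g hg).2 f hf)
    convert this using 1 <;> group
  obtain ⟨u, hu⟩ := exists_sub_sum_smul_of_zpow_mul_eq_one_sub_mul t (fun g => n - k g) y
  exact ⟨u * y', y' - D, by rw [mul_sub, hD, ← sub_mul, hu, mul_assoc],
    conj_sub_sum_smul_of_zpow_mul_ne_zero h₀ hy hy₀ n fun g hg => (hn g hg).1.ne'⟩

theorem exists_one_sub_mul_eq_mul_ne_zero [Nontrivial K] {t : G} {χ₀ χ₁ : G →* Multiplicative ℤ}
    (h₀ : χ₀ t = .ofAdd 1) (h₁ : χ₁ t = .ofAdd 1)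
    (hcomm : ∀ g ∈ χ₁.ker, χ₀.ker ≤ eventualCentralizer t g) (b : K[G]) :
    ∃ u v : K[G], (1 - of K G t) * u = b * v ∧ v ≠ 0 := by
  obtain ⟨y, u₀, hy, rfl⟩ := exists_support_subset_ker_eq_add_one_sub_mul (K := K) h₀ b
  rcases eq_or_ne y 0 with rfl | hy₀
  · exact ⟨u₀, 1, by simp, one_ne_zero⟩
  obtain ⟨u, v, huv, hv⟩ := exists_mul_eq_one_sub_mul_ne_zero h₀ h₁ hcomm hy hy₀
  exact ⟨u + u₀ * v, v, by rw [mul_add, ← huv, add_mul, mul_assoc], hv⟩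

end MonoidAlgebra

namespace Thompson

theorem xF_mul_xF {i j : ℕ} (hij : i < j) : xF j * xF i = xF i * xF (j + 1) := by
  have hrel : PresentedGroup.mk thompsonRels
      (FreeGroup.of j * FreeGroup.of i * (FreeGroup.of i * FreeGroup.of (j + 1))⁻¹) = 1 :=
    (QuotientGroup.eq_one_iff _).2 (Subgroup.subset_normalClosure ⟨i, j, hij, rfl⟩)
  rwa [map_mul, map_mul, map_inv, map_mul, mul_inv_eq_one] at hrel

theorem mem_closure_range_xF (g : ThompsonF) : g ∈ Subgroup.closure (Set.range xF) := by
  rw [show Set.range xF = Set.range PresentedGroup.of from rfl, PresentedGroup.closure_range_of]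
  trivial

-- Up to sign, `χ₀` and `χ₁` are the `log₂` of the slopes at `0` and at `1`.
def χ₀ : ThompsonF →* Multiplicative ℤ :=
  PresentedGroup.toGroup (f := fun n => .ofAdd (if n = 0 then 1 else 0)) <| by
    rintro _ ⟨i, j, hij, rfl⟩
    simp [show j ≠ 0 by omega]

def χ₁ : ThompsonF →* Multiplicative ℤ :=
  PresentedGroup.toGroup (f := fun _ => .ofAdd 1) <| by
    rintro _ ⟨i, j, hij, rfl⟩
    simp

theorem χ₀_xF (n : ℕ) : χ₀ (xF n) = .ofAdd (if n = 0 then 1 else 0) :=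
  PresentedGroup.toGroup.of _

theorem χ₁_xF (n : ℕ) : χ₁ (xF n) = .ofAdd 1 :=
  PresentedGroup.toGroup.of _

-- The paper's `xₙ = x₀^{-(n-1)} x₁ x₀^{n-1}` for every `n : ℤ`, so that shifting indices by
-- conjugation never needs truncated subtraction.
def xZ (n : ℤ) : ThompsonF := xF 0 ^ (-(n - 1)) * xF 1 * xF 0 ^ (n - 1)

theorem xZ_natCast {n : ℕ} (hn : 1 ≤ n) : xZ n = xF n := by
  induction n, hn using Nat.le_induction with
  | base => simp [xZ]
  | succ n hn ih =>
    have : xZ (n + 1 : ℕ) = (xF 0)⁻¹ * xZ n * xF 0 := by simp only [xZ]; push_cast; group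
    rw [this, ih, mul_assoc, xF_mul_xF (by omega), inv_mul_cancel_left]

theorem eventually_xZ_mul (g : ThompsonF) :
    ∀ᶠ n : ℤ in atTop, xZ n * g = g * xZ (n + Multiplicative.toAdd (χ₁ g)) := by
  induction mem_closure_range_xF g using Subgroup.closure_induction with
  | mem _ h =>
    obtain ⟨i, rfl⟩ := h
    filter_upwards [eventually_ge_atTop ((i : ℤ) + 1)] with n hn
    lift n to ℕ using by omega
    rw [χ₁_xF, toAdd_ofAdd, xZ_natCast (by omega), ← Nat.cast_succ, xZ_natCast (by omega),
      xF_mul_xF (by omega)]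
  | one => simp
  | mul g h _ _ hg hh =>
    filter_upwards [hg, (tendsto_atTop_add_const_right atTop (Multiplicative.toAdd (χ₁ g))
      tendsto_id).eventually hh] with n hg hh
    simp only [id] at hh
    rw [← mul_assoc, hg, mul_assoc, hh, ← mul_assoc, map_mul, toAdd_mul, add_assoc]
  | inv g _ hg =>
    filter_upwards [(tendsto_atTop_add_const_right atTop
      (-Multiplicative.toAdd (χ₁ g)) tendsto_id).eventually hg] with n hn
    rw [id, neg_add_cancel_right] at hn
    rw [map_inv, toAdd_inv, ← sub_eq_add_neg, eq_inv_mul_iff_mul_eq, ← mul_assoc, ← hn,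
      sub_eq_add_neg, mul_inv_cancel_right]

theorem xF_one_mem_eventualCentralizer {g : ThompsonF} (hg : g ∈ χ₁.ker) :
    xF 1 ∈ eventualCentralizer (xF 0) g := by
  filter_upwards [(tendsto_atTop_add_const_right atTop 1 tendsto_id).eventually
    (eventually_xZ_mul g)] with n hn
  rw [MonoidHom.mem_ker.1 hg, toAdd_one, add_zero, id] at hn
  have : xF 0 ^ (-n) * xF 1 * xF 0 ^ n = xZ (n + 1) := by simp [xZ]
  exact this ▸ hn

-- `f * x₀ ^ (-χ₀ f)` is a product of `x₀`-conjugates of `x₁` and their inverses.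
theorem mul_zpow_χ₀_mem_eventualCentralizer {g : ThompsonF} (hg : g ∈ χ₁.ker)
    (f : ThompsonF) :
    f * xF 0 ^ (-Multiplicative.toAdd (χ₀ f)) ∈ eventualCentralizer (xF 0) g := by
  induction mem_closure_range_xF f using Subgroup.closure_induction with
  | mem _ h =>
    obtain ⟨i, rfl⟩ := h
    rcases Nat.eq_zero_or_pos i with rfl | hi
    · simp [χ₀_xF]
    · have hx : xF i * xF 0 ^ (-Multiplicative.toAdd (χ₀ (xF i)))
          = xF 0 ^ (-((i : ℤ) - 1)) * xF 1 * xF 0 ^ (-(-((i : ℤ) - 1))) := by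
        rw [χ₀_xF, if_neg (by omega), ← xZ_natCast hi, xZ, neg_neg]
        simp
      exact hx ▸ zpow_mul_mul_zpow_neg_mem_eventualCentralizer
        (xF_one_mem_eventualCentralizer hg) _
  | one => simp
  | mul f f' _ _ hf hf' =>
    convert mul_mem hf (zpow_mul_mul_zpow_neg_mem_eventualCentralizer hf'
      (Multiplicative.toAdd (χ₀ f))) using 1
    rw [map_mul, toAdd_mul]
    group
  | inv f _ hf =>
    convert zpow_mul_mul_zpow_neg_mem_eventualCentralizer (inv_mem hf)
      (-Multiplicative.toAdd (χ₀ f)) using 1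
    rw [map_inv, toAdd_inv]
    group

theorem ker_χ₀_le_eventualCentralizer {g : ThompsonF} (hg : g ∈ χ₁.ker) :
    χ₀.ker ≤ eventualCentralizer (xF 0) g := fun f hf => by
  simpa [MonoidHom.mem_ker.1 hf] using mul_zpow_χ₀_mem_eventualCentralizer hg f

end Thompson

/-- in `K[F]`, for any `b` the equation `(1 - x_0)u = b v` has a
non-zero solution. -/
theorem stmt9 (K : Type*) [Field K] (b : MonoidAlgebra K ThompsonF) :
    ∃ u v : MonoidAlgebra K ThompsonF,
      (1 - XF K 0) * u = b * v ∧ (u ≠ 0 ∨ v ≠ 0) := by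
  obtain ⟨u, v, huv, hv⟩ := MonoidAlgebra.exists_one_sub_mul_eq_mul_ne_zero
    (Thompson.χ₀_xF 0) (Thompson.χ₁_xF 0) (fun _ => Thompson.ker_χ₀_le_eventualCentralizer) b
  exact ⟨u, v, huv, .inr hv⟩
end

section
/- In the monoid ring K[M] of Thompson's monoid over a field K, for every k ≥ 2 there exist ξ_k, η_k in K[M_1] (the subring generated by x_1, x_2, ...) with deg ξ_k ≤ k - 1 and deg η_k ≤ k - 1 such that x_0^k ≡ x_0·ξ_k + η_k modulo the principal right ideal v_0·K[M], where v_0 = 1 - x_3 - x_0^2 + x_0 x_1. -/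
/-!
Multiplying `x₀ᵏ ≡ x₀ξ + η (mod v₀K[M])` on the right by `x₀` and moving `x₀` to the left
through `K[M₁]` with `ξx₀ = x₀φ(ξ)` (from `xⱼx₀ = x₀xⱼ₊₁`) gives
`x₀ᵏ⁺¹ ≡ x₀²φ(ξ) + x₀φ(η)`. Since `x₀² ≡ 1 - x₃ + x₀x₁`, this is
`x₀(x₁φ(ξ) + φ(η)) + (1 - x₃)φ(ξ)`. The shift `φ` preserves length and maps `M` into `M₁`,
so starting from `x₀ = x₀·1 + 0` each step raises the degree by at most one.
-/

open MonoidAlgebra Pointwise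

namespace MonoidAlgebra

variable {R M : Type*} [CommSemiring R]

theorem mul_mem_supported [Mul M] {s t : Set M} {x y : R[M]} (hx : x ∈ supported R R s)
    (hy : y ∈ supported R R t) : x * y ∈ supported R R (s * t) := by
  classical
  intro g hg
  obtain ⟨a, ha, b, hb, rfl⟩ := Finset.mem_mul.1 (support_coeff_mul_subset x y hg)
  exact Set.mul_mem_mul (hx ha) (hy hb)

theorem mapDomain_mem_supported {N : Type*} {f : M → N} {s : Set M} {x : R[M]}
    (hx : x ∈ supported R R s) : mapDomain f x ∈ supported R R (f '' s) := by
  classical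
  intro n hn
  obtain ⟨g, hg, rfl⟩ := Finset.mem_image.1 (Finsupp.mapDomain_support hn)
  exact Set.mem_image_of_mem f (hx hg)

variable [Monoid M]

variable (R) in
noncomputable def supportedSubalgebra (S : Submonoid M) : Subalgebra R R[M] :=
  (supported R R (S : Set M)).toSubalgebra
    (fun _ hg => (Finset.mem_one.1 (support_coeff_one_subset hg)).symm ▸ S.one_mem)
    fun _ _ hx hy => S.coe_mul_self_eq ▸ mul_mem_supported hx hy

theorem mem_supportedSubalgebra {S : Submonoid M} {x : R[M]} :
    x ∈ supportedSubalgebra R S ↔ ∀ g ∈ x.coeff.support, g ∈ S :=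
  Submodule.mem_toSubalgebra.trans mem_supported

theorem mul_of_eq_of_mul_mapDomain {f : M → M} {s : Set M} {m : M}
    (h : ∀ g ∈ s, g * m = m * f g) {x : R[M]} (hx : x ∈ supported R R s) :
    x * of R M m = of R M m * mapDomain f x := by
  rw [supported_eq_span_single] at hx
  induction hx using Submodule.span_induction with
  | mem _ hy =>
    obtain ⟨g, hg, rfl⟩ := hy
    simp [single_mul_single, h g hg]
  | zero => simp
  | add _ _ _ _ hx hy => rw [add_mul, hx, hy, mapDomain_add, mul_add]
  | smul c _ _ hx => rw [smul_mul_assoc, hx, mapDomain_smul, mul_smul_comm]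

theorem of_mem_supportedSubalgebra {S : Submonoid M} {m : M} (hm : m ∈ S) :
    of R M m ∈ supportedSubalgebra R S :=
  mem_supportedSubalgebra.2 fun _ hg =>
    (Finset.mem_singleton.1 (Finsupp.support_single_subset hg)) ▸ hm

end MonoidAlgebra

theorem decomposition_mul_right {A : Type*} [Ring A] {x₀ x₁ x₃ w ξ η ξ' η' : A}
    (hξ : ξ * x₀ = x₀ * ξ') (hη : η * x₀ = x₀ * η') :
    ((1 - x₃ - x₀ ^ 2 + x₀ * x₁) * w + x₀ * ξ + η) * x₀ =
      (1 - x₃ - x₀ ^ 2 + x₀ * x₁) * (w * x₀ - ξ') + x₀ * (x₁ * ξ' + η') + (1 - x₃) * ξ' := by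
  rw [add_mul, add_mul, mul_assoc x₀, hξ, hη]
  noncomm_ring

theorem xM_mul_xM_of_lt {i j : ℕ} (hij : i < j) : xM j * xM i = xM i * xM (j + 1) :=
  (Con.eq _).2 (ConGen.Rel.of _ _ ⟨i, j, hij, rfl, rfl⟩)

-- `ThompsonM` and `xM` are definitionally `PresentedMonoid thompsonRel` and its generators.
theorem closure_range_xM : Submonoid.closure (Set.range xM) = ⊤ :=
  PresentedMonoid.closure_range_of thompsonRel

theorem shiftM_xM (n : ℕ) : shiftM (xM n) = xM (n + 1) := rfl

theorem lenM_xM (n : ℕ) : lenM (xM n) = Multiplicative.ofAdd 1 := rfl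

theorem shiftM_mem_Msub_one (g : ThompsonM) : shiftM g ∈ Msub 1 := by
  have : (⊤ : Submonoid ThompsonM).map shiftM ≤ Msub 1 := by
    rw [← closure_range_xM, MonoidHom.map_mclosure, Submonoid.closure_le]
    rintro _ ⟨_, ⟨n, rfl⟩, rfl⟩
    exact Submonoid.subset_closure ⟨n + 1, by omega, shiftM_xM n⟩
  exact this ⟨g, trivial, rfl⟩

theorem mlen_shiftM (g : ThompsonM) : mlen (shiftM g) = mlen g := by
  have : lenM.comp shiftM = lenM :=
    MonoidHom.eq_of_eqOn_denseM closure_range_xM <| by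
      rintro _ ⟨n, rfl⟩
      rfl
  exact congrArg Multiplicative.toAdd (DFunLike.congr_fun this g)

theorem mul_xM_zero_of_mem_Msub_one {g : ThompsonM} (hg : g ∈ Msub 1) :
    g * xM 0 = xM 0 * shiftM g := by
  induction hg using Submonoid.closure_induction with
  | mem _ h =>
    obtain ⟨n, hn, rfl⟩ := h
    exact xM_mul_xM_of_lt hn
  | one => simp
  | mul a b _ _ ha hb => rw [mul_assoc, hb, ← mul_assoc, ha, map_mul, mul_assoc]

section degreeLE

variable (R : Type*) [CommSemiring R] in
noncomputable def degreeLE (n : ℕ) : Submodule R R[ThompsonM] :=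
  supported R R {g | mlen g ≤ n}

theorem mdeg_le_iff_mem_degreeLE {K : Type*} [Field K] {a : K[ThompsonM]} {n : ℕ} :
    mdeg a ≤ n ↔ a ∈ degreeLE K n :=
  Finset.sup_le_iff

variable {R : Type*} [CommSemiring R]

theorem degreeLE_mono {m n : ℕ} (h : m ≤ n) : degreeLE R m ≤ degreeLE R n :=
  supported_mono fun _ hg => le_trans (α := ℕ) hg h

theorem mul_mem_degreeLE {a b : R[ThompsonM]} {m n : ℕ} (ha : a ∈ degreeLE R m)
    (hb : b ∈ degreeLE R n) : a * b ∈ degreeLE R (m + n) := by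
  refine supported_mono ?_ (mul_mem_supported ha hb)
  rintro _ ⟨g, hg, h, hh, rfl⟩
  simp only [Set.mem_ofPred_eq, mlen, map_mul, toAdd_mul] at hg hh ⊢
  omega

theorem one_mem_degreeLE (n : ℕ) : (1 : R[ThompsonM]) ∈ degreeLE R n := by
  intro g hg
  rw [Finset.mem_one.1 (support_coeff_one_subset hg)]
  exact Nat.zero_le n

theorem XMa_mem_degreeLE_one {K : Type*} [Field K] (n : ℕ) : XMa K n ∈ degreeLE K 1 := by
  intro g hg
  rw [Finset.mem_singleton.1 (Finsupp.support_single_subset hg)]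
  exact (lenM_xM n).le

theorem shiftA_mem_degreeLE {K : Type*} [Field K] {a : K[ThompsonM]} {n : ℕ}
    (ha : a ∈ degreeLE K n) : shiftA K a ∈ degreeLE K n := by
  refine supported_mono ?_ (mapDomain_mem_supported ha)
  rintro _ ⟨g, hg, rfl⟩
  rwa [Set.mem_ofPred_eq, mlen_shiftM]

end degreeLE

section Msub

variable {K : Type*} [Field K]

theorem XMa_mem_Msub_one {n : ℕ} (hn : 1 ≤ n) : XMa K n ∈ supportedSubalgebra K (Msub 1) :=
  of_mem_supportedSubalgebra (Submonoid.subset_closure ⟨n, hn, rfl⟩)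

theorem shiftA_mem_Msub_one (a : K[ThompsonM]) : shiftA K a ∈ supportedSubalgebra K (Msub 1) :=
  supported_mono (Set.image_subset_iff.2 fun g _ => shiftM_mem_Msub_one g)
    (mapDomain_mem_supported (s := Set.univ) fun _ _ => trivial)

theorem mul_XMa_zero_of_mem_Msub_one {a : K[ThompsonM]}
    (ha : a ∈ supportedSubalgebra K (Msub 1)) : a * XMa K 0 = XMa K 0 * shiftA K a :=
  mul_of_eq_of_mul_mapDomain (fun _ => mul_xM_zero_of_mem_Msub_one) ha

end Msub

theorem exists_pow_succ_eq (K : Type*) [Field K] (k : ℕ) :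
    ∃ ξ ∈ supportedSubalgebra K (Msub 1), ∃ η ∈ supportedSubalgebra K (Msub 1),
      ξ ∈ degreeLE K k ∧ η ∈ degreeLE K k ∧ ∃ w : K[ThompsonM],
        XMa K 0 ^ (k + 1) =
          (1 - XMa K 3 - XMa K 0 ^ 2 + XMa K 0 * XMa K 1) * w + XMa K 0 * ξ + η := by
  induction k with
  | zero => exact ⟨1, one_mem _, 0, zero_mem _, one_mem_degreeLE 0, zero_mem _, 0, by simp⟩
  | succ k ih =>
    obtain ⟨ξ, hξ, η, hη, hξk, hηk, w, hw⟩ := ih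
    have hX₁ := XMa_mem_Msub_one (K := K) le_rfl
    have hX₃ := XMa_mem_Msub_one (K := K) (n := 3) (by norm_num)
    have hξ' := shiftA_mem_degreeLE hξk
    refine ⟨XMa K 1 * shiftA K ξ + shiftA K η,
      add_mem (mul_mem hX₁ (shiftA_mem_Msub_one ξ)) (shiftA_mem_Msub_one η),
      (1 - XMa K 3) * shiftA K ξ,
      mul_mem (sub_mem (one_mem _) hX₃) (shiftA_mem_Msub_one ξ), ?_, ?_,
      w * XMa K 0 - shiftA K ξ, ?_⟩
    · rw [add_comm k 1]
      exact add_mem (mul_mem_degreeLE (XMa_mem_degreeLE_one 1) hξ')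
        (degreeLE_mono (by omega) (shiftA_mem_degreeLE hηk))
    · rw [add_comm k 1]
      exact mul_mem_degreeLE (sub_mem (one_mem_degreeLE 1) (XMa_mem_degreeLE_one 3)) hξ'
    · rw [pow_succ, hw]
      exact decomposition_mul_right (mul_XMa_zero_of_mem_Msub_one hξ)
        (mul_XMa_zero_of_mem_Msub_one hη)

/-- for every `k ≥ 2` there are `ξ_k, η_k ∈ K[M_1]` of degree
`≤ k-1` with `x_0^k ≡ x_0 ξ_k + η_k` modulo the right ideal `v_0 K[M]`,
where `v_0 = 1 - x_3 - x_0² + x_0 x_1`. -/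
theorem stmt12 (K : Type*) [Field K] (k : ℕ) (hk : 2 ≤ k) :
    ∃ ξ η : MonoidAlgebra K ThompsonM,
      (∀ g ∈ ξ.coeff.support, g ∈ Msub 1) ∧ (∀ g ∈ η.coeff.support, g ∈ Msub 1) ∧
      mdeg ξ ≤ k - 1 ∧ mdeg η ≤ k - 1 ∧
      ∃ w : MonoidAlgebra K ThompsonM,
        XMa K 0 ^ k =
          (1 - XMa K 3 - XMa K 0 ^ 2 + XMa K 0 * XMa K 1) * w + XMa K 0 * ξ + η := by
  obtain ⟨ξ, hξ, η, hη, hξk, hηk, w, hw⟩ := exists_pow_succ_eq K (k - 1)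
  rw [Nat.sub_add_cancel (by omega)] at hw
  exact ⟨ξ, η, mem_supportedSubalgebra.1 hξ, mem_supportedSubalgebra.1 hη,
    mdeg_le_iff_mem_degreeLE.2 hξk, mdeg_le_iff_mem_degreeLE.2 hηk, w, hw⟩
end

section
/- Thompson's monoid M = ⟨x_0, x_1, x_2, ... | x_j x_i = x_i x_{j+1} for 0 ≤ i < j⟩ is cancellative: for all a, b, c ∈ M, if ab = ac then b = c, and if ba = ca then b = c. -/
/-!
Pushing `x_i` rightwards through a word past every smaller letter `x_a`, via
`x_i x_a = x_a x_{i+1}`, respects the defining relations, so it gives an action of `M` on words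
by injective maps. Acting on the empty word yields a word spelling the element itself, so the orbit
map is injective as well, and `ab = ac` gives `b • [] = c • []`, hence `b = c`. Right cancellation
is the mirror argument, pushing `x_i` leftwards past every larger letter `x_b`, which becomes
`x_{b+1}`.
-/

open Function

theorem mul_left_cancel_of_injective_action {M α : Type*} [Monoid M] (ρ : M →* Function.End α)
    (x₀ : α) (hρ : ∀ g, Injective (ρ g))
    (horbit : Injective fun g => ρ g x₀) {a b c : M} (h : a * b = a * c) : b = c :=
  horbit <| hρ a <| by
    have := congrFun (congrArg ρ h) x₀
    rwa [map_mul, map_mul] at this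

namespace Thompson

theorem xM_mul_xM_of_lt {i j : ℕ} (h : i < j) : xM j * xM i = xM i * xM (j + 1) :=
  (Con.eq _).2 (ConGen.Rel.of _ _ ⟨i, j, h, rfl, rfl⟩)

theorem xM_induction {p : ThompsonM → Prop} (one : p 1)
    (mul : ∀ i g, p g → p (xM i * g)) (g : ThompsonM) : p g := by
  induction g using Con.induction_on with
  | H w =>
    induction w using FreeMonoid.inductionOn' with
    | one => exact one
    | of_mul i w ih => exact mul i _ ih

def word (u : List ℕ) : ThompsonM := (u.map xM).prod

/-- Words for right multiplication are stored reversed, so that the letter next to an incoming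
generator is the head of the list. -/
def revWord (u : List ℕ) : ThompsonM := (u.map xM).reverse.prod

def insertLeft : ℕ → List ℕ → List ℕ
  | i, [] => [i]
  | i, a :: t => if a < i then a :: insertLeft (i + 1) t else i :: a :: t

def deleteLeft : ℕ → List ℕ → List ℕ
  | _, [] => []
  | i, a :: t => if a < i then a :: deleteLeft (i + 1) t else t

def insertRight : ℕ → List ℕ → List ℕ
  | i, [] => [i]
  | i, b :: t => if i < b then (b + 1) :: insertRight i t else i :: b :: t

def deleteRight : ℕ → List ℕ → List ℕ
  | _, [] => []
  | i, b :: t => if i < b then (b - 1) :: deleteRight i t else t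

theorem insertLeft_comm {i j : ℕ} (h : i < j) (u : List ℕ) :
    insertLeft j (insertLeft i u) = insertLeft i (insertLeft (j + 1) u) := by
  induction u generalizing i j with
  | nil => simp [insertLeft, h, show ¬ j + 1 < i by omega]
  | cons a t ih =>
    have := @ih (i + 1) (j + 1) (by omega)
    grind [insertLeft]

theorem insertRight_comm {i j : ℕ} (h : i < j) (u : List ℕ) :
    insertRight i (insertRight j u) = insertRight (j + 1) (insertRight i u) := by
  induction u generalizing i j with
  | nil => simp [insertRight, h, show ¬ j + 1 < i by omega]
  | cons b t ih =>
    have := @ih i j h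
    grind [insertRight]

theorem deleteLeft_insertLeft (i : ℕ) : LeftInverse (deleteLeft i) (insertLeft i) := by
  intro u
  induction u generalizing i with
  | nil => simp [insertLeft, deleteLeft]
  | cons a t ih => grind [insertLeft, deleteLeft]

theorem deleteRight_insertRight (i : ℕ) : LeftInverse (deleteRight i) (insertRight i) := by
  intro u
  induction u generalizing i with
  | nil => simp [insertRight, deleteRight]
  | cons b t ih => grind [insertRight, deleteRight]

theorem xM_mul_word (i : ℕ) (u : List ℕ) : xM i * word u = word (insertLeft i u) := by
  induction u generalizing i with
  | nil => simp [word, insertLeft]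
  | cons a t ih =>
    by_cases h : a < i
    · simp only [word, insertLeft, h, if_true, List.map_cons, List.prod_cons] at ih ⊢
      rw [← mul_assoc, xM_mul_xM_of_lt h, mul_assoc, ih]
    · simp [word, insertLeft, h]

theorem revWord_mul_xM (i : ℕ) (u : List ℕ) : revWord u * xM i = revWord (insertRight i u) := by
  induction u generalizing i with
  | nil => simp [revWord, insertRight]
  | cons b t ih =>
    by_cases h : i < b
    · simp only [revWord, insertRight, h, if_true, List.map_cons, List.reverse_cons,
        List.prod_append, List.prod_singleton] at ih ⊢
      rw [mul_assoc, xM_mul_xM_of_lt h, ← mul_assoc, ih]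
    · simp [revWord, insertRight, h, mul_assoc]

def leftAct : ThompsonM →* Function.End (List ℕ) :=
  Con.lift _ (FreeMonoid.lift fun i => (insertLeft i : Function.End (List ℕ))) <| by
    refine Con.conGen_le.2 ?_
    rintro _ _ ⟨i, j, h, rfl, rfl⟩
    exact funext (insertLeft_comm h)

def rightAct : ThompsonMᵐᵒᵖ →* Function.End (List ℕ) :=
  (MulEquiv.opOp _).symm.toMonoidHom.comp <| MonoidHom.op <|
    Con.lift thompsonCon
      (FreeMonoid.lift fun i => MulOpposite.op (α := Function.End (List ℕ)) (insertRight i)) <| by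
        refine Con.conGen_le.2 ?_
        rintro _ _ ⟨i, j, h, rfl, rfl⟩
        exact congrArg MulOpposite.op (funext (insertRight_comm h))

theorem leftAct_one (u : List ℕ) : leftAct 1 u = u := by
  rw [map_one]; rfl

theorem leftAct_xM_mul (i : ℕ) (g : ThompsonM) (u : List ℕ) :
    leftAct (xM i * g) u = insertLeft i (leftAct g u) := by
  rw [map_mul]; rfl

theorem rightAct_one (u : List ℕ) : rightAct 1 u = u := by
  rw [map_one]; rfl

theorem rightAct_op_xM_mul (i : ℕ) (g : ThompsonM) (u : List ℕ) :
    rightAct (MulOpposite.op (xM i * g)) u = rightAct (MulOpposite.op g) (insertRight i u) := by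
  rw [MulOpposite.op_mul, map_mul]; rfl

theorem leftAct_injective (g : ThompsonM) : Injective (leftAct g) := by
  induction g using xM_induction with
  | one => exact fun u v huv => by rwa [leftAct_one, leftAct_one] at huv
  | mul i g ih =>
    intro u v huv
    rw [leftAct_xM_mul, leftAct_xM_mul] at huv
    exact ih ((deleteLeft_insertLeft i).injective huv)

theorem rightAct_injective (g : ThompsonMᵐᵒᵖ) : Injective (rightAct g) := by
  induction g using MulOpposite.rec' with
  | h g =>
    induction g using xM_induction with
    | one => exact fun u v huv => by rwa [MulOpposite.op_one, rightAct_one, rightAct_one] at huv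
    | mul i g ih =>
      intro u v huv
      rw [rightAct_op_xM_mul, rightAct_op_xM_mul] at huv
      exact (deleteRight_insertRight i).injective (ih huv)

theorem word_leftAct (g : ThompsonM) (u : List ℕ) : word (leftAct g u) = g * word u := by
  induction g using xM_induction generalizing u with
  | one => rw [leftAct_one, one_mul]
  | mul i g ih => rw [leftAct_xM_mul, ← xM_mul_word, ih, mul_assoc]

theorem revWord_rightAct (g : ThompsonM) (u : List ℕ) :
    revWord (rightAct (MulOpposite.op g) u) = revWord u * g := by
  induction g using xM_induction generalizing u with
  | one => rw [MulOpposite.op_one, rightAct_one, mul_one]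
  | mul i g ih => rw [rightAct_op_xM_mul, ih, ← revWord_mul_xM, mul_assoc]

theorem leftAct_orbit_injective : Injective fun g => leftAct g [] :=
  LeftInverse.injective (g := word) fun g => (word_leftAct g []).trans (mul_one g)

theorem rightAct_orbit_injective : Injective fun g : ThompsonMᵐᵒᵖ => rightAct g [] :=
  LeftInverse.injective (g := fun u => MulOpposite.op (revWord u)) fun g =>
    congrArg MulOpposite.op ((revWord_rightAct g.unop []).trans (one_mul g.unop))

end Thompson

open Thompson in
/-- Thompson's monoid is cancellative. -/
theorem stmt19 (a b c : ThompsonM) :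
    (a * b = a * c → b = c) ∧ (b * a = c * a → b = c) := by
  refine ⟨mul_left_cancel_of_injective_action leftAct [] leftAct_injective
    leftAct_orbit_injective, fun h => ?_⟩
  exact MulOpposite.op_injective <| mul_left_cancel_of_injective_action rightAct []
    rightAct_injective rightAct_orbit_injective (congrArg MulOpposite.op h)
end
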